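/- arXiv:1404.7067 — 3 statements merged into one kernel-verified Lean document; each statement's English description precedes it below -/
import Mathlib

section
/- For every weak Dynamic Time Petri Net N (i.e., a DTPN whose dynamic interval function Id is trivial) that has a finite set of reachable markings, there exists a Time Petri Net N' together with a labelling of the transitions of N' by T ∪ {τ̂} (τ̂ silent) such that the state graph of N (with each discrete transition labelled by the transition fired and each delay transition by its duration) and the state graph of N' (with each discrete transition labelled by the label of the transition fired) are weakly timed bisimilar. -/
open scoped Classical

noncomputable section

/-- A time interval: the closed interval `[lo, hi]` (with `hi` possibly `∞`,
in which case the interval is `[lo, ∞)`), with nonnegative left endpoint. -/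
structure TimeInterval where
  lo : ℝ
  hi : EReal
  lo_nonneg : 0 ≤ lo
  lo_le_hi : (lo : EReal) ≤ hi

/-- Membership in a time interval. -/
def TimeInterval.mem (I : TimeInterval) (x : ℝ) : Prop :=
  I.lo ≤ x ∧ (x : EReal) ≤ I.hi

/-- A Dynamic Time Petri Net over places `P` and transitions `T`:
precondition and postcondition functions, initial marking, static interval
function `Is` and dynamic interval function `Idyn`. -/
structure DTPN (P T : Type) where
  Pre : T → P → ℕ
  Post : T → P → ℕ
  m0 : P → ℕ
  Is : T → (P → ℕ) → TimeInterval
  Idyn : T → (P → ℕ) → ℝ → TimeInterval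

variable {P T P' T' : Type}

/-- `t` is enabled at marking `m`. -/
def enabled (N : DTPN P T) (m : P → ℕ) (t : T) : Prop :=
  ∀ p, N.Pre t p ≤ m p

/-- The marking obtained by firing `t` from `m`: `m - Pre(t) + Post(t)`. -/
def fire (N : DTPN P T) (m : P → ℕ) (t : T) : P → ℕ :=
  fun p => m p - N.Pre t p + N.Post t p

/-- `k` is persistent when `t` fires from `m`. -/
def pers (N : DTPN P T) (m : P → ℕ) (t k : T) : Prop :=
  k ≠ t ∧ enabled N m k ∧ ∀ p, N.Pre k p ≤ m p - N.Pre t p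

/-- `k` is newly enabled when `t` fires from `m`. -/
def nenabl (N : DTPN P T) (m : P → ℕ) (t k : T) : Prop :=
  (¬ enabled N m k ∨ k = t) ∧ enabled N (fire N m t) k

/-- A state of a net: a marking together with a firing function.  The firing
function is represented as a total function that is (by convention) `0` on
transitions that are not enabled. -/
abbrev NState (P T : Type) := (P → ℕ) × (T → ℝ)

/-- Initial states of a net. -/
def initState (N : DTPN P T) (s : NState P T) : Prop :=
  s.1 = N.m0 ∧ (∀ t, enabled N N.m0 t → (N.Is t N.m0).mem (s.2 t)) ∧
    ∀ t, ¬ enabled N N.m0 t → s.2 t = 0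

/-- Discrete transition: `t` fires from `s` leading to `s'`. -/
def discStep (N : DTPN P T) (s : NState P T) (t : T) (s' : NState P T) : Prop :=
  enabled N s.1 t ∧ s.2 t = 0 ∧ s'.1 = fire N s.1 t ∧
  (∀ k, pers N s.1 t k → (N.Idyn k s'.1 (s.2 k)).mem (s'.2 k)) ∧
  (∀ k, enabled N s'.1 k → ¬ pers N s.1 t k → (N.Is k s'.1).mem (s'.2 k)) ∧
  ∀ k, ¬ enabled N s'.1 k → s'.2 k = 0

/-- Delay (time elapsing) transition of duration `θ`. -/
def delayStep (N : DTPN P T) (s : NState P T) (θ : ℝ) (s' : NState P T) : Prop :=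
  0 ≤ θ ∧ (∀ k, enabled N s.1 k → θ ≤ s.2 k) ∧ s'.1 = s.1 ∧
  s'.2 = fun k => if enabled N s.1 k then s.2 k - θ else 0

/-- Labels of a timed transition system: a discrete transition in `T`,
a delay in `ℝ≥0`, or the silent label `τ̂`. -/
inductive TLabel (T : Type) where
  | disc : T → TLabel T
  | delay : ℝ → TLabel T
  | silent : TLabel T

/-- A timed transition system. -/
structure TTS (S L : Type) where
  init : Set S
  step : S → L → S → Prop

/-- Reachability in a timed transition system. -/
def TTS.Reach {S L : Type} (A : TTS S L) (s : S) : Prop :=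
  ∃ s0 ∈ A.init, Relation.ReflTransGen (fun x y => ∃ l, A.step x l y) s0 s

/-- Reflexive-transitive closure of silent steps. -/
def silentSteps {S : Type} (A : TTS S (TLabel T)) : S → S → Prop :=
  Relation.ReflTransGen fun x y => A.step x TLabel.silent y

/-- Weak transition `s ⇒α s'` : `(→τ̂)* →α` for `α ≠ τ̂` and `(→τ̂)*` for `α = τ̂`. -/
def weakStep {S : Type} (A : TTS S (TLabel T)) (s : S) (α : TLabel T) (s' : S) : Prop :=
  match α with
  | TLabel.silent => silentSteps A s s'
  | α => ∃ s₁, silentSteps A s s₁ ∧ A.step s₁ α s'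

/-- `R` is a weak timed simulation of `A` by `B`. -/
def WeakSim {S₁ S₂ : Type} (A : TTS S₁ (TLabel T)) (B : TTS S₂ (TLabel T))
    (R : S₁ → S₂ → Prop) : Prop :=
  ∀ s₁ α s₁', A.step s₁ α s₁' → ∀ s₂, R s₁ s₂ →
    ∃ s₂', weakStep B s₂ α s₂' ∧ R s₁' s₂'

/-- `A` and `B` are weakly timed bisimilar: there is a relation `R`, relating
the initial states of the two systems, such that both `R` and `R⁻¹` are weak
timed simulations. -/
def Bisimilar {S₁ S₂ : Type} (A : TTS S₁ (TLabel T)) (B : TTS S₂ (TLabel T)) : Prop :=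
  ∃ R : S₁ → S₂ → Prop,
    WeakSim A B R ∧ WeakSim B A (fun y x => R x y) ∧
    (∀ s₁ ∈ A.init, ∃ s₂ ∈ B.init, R s₁ s₂) ∧
    (∀ s₂ ∈ B.init, ∃ s₁ ∈ A.init, R s₁ s₂)

/-- The state graph of a net: discrete transitions are labelled by the
transition fired, delay transitions by their duration; no silent steps. -/
def SG (N : DTPN P T) : TTS (NState P T) (TLabel T) where
  init := {s | initState N s}
  step := fun s α s' =>
    match α with
    | TLabel.disc t => discStep N s t s'
    | TLabel.delay θ => delayStep N s θ s'
    | TLabel.silent => False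

/-- The state graph of a net whose transitions are labelled by `T ∪ {τ̂}`
through `ℓ` (`none` = silent). -/
def labelledSG (N : DTPN P' T') (ℓ : T' → Option T) :
    TTS (NState P' T') (TLabel T) where
  init := {s | initState N s}
  step := fun s α s' =>
    match α with
    | TLabel.disc t => ∃ t', ℓ t' = some t ∧ discStep N s t' s'
    | TLabel.delay θ => delayStep N s θ s'
    | TLabel.silent => ∃ t', ℓ t' = none ∧ discStep N s t' s'

/-- The dynamic interval function is trivial : `Idyn(t,m,θ) = [θ,θ]`. -/
def TrivialIdyn (N : DTPN P T) : Prop :=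
  ∀ t m θ x, 0 ≤ θ → ((N.Idyn t m θ).mem x ↔ x = θ)

/-- A Time Petri Net: a DTPN whose dynamic interval function is trivial and
whose static interval function does not depend on the marking. -/
def IsTPN (N : DTPN P T) : Prop :=
  TrivialIdyn N ∧ ∀ t m m', N.Is t m = N.Is t m'

/-- `N` has a finite set of reachable markings. -/
def FiniteMarkings (N : DTPN P T) : Prop :=
  {m : P → ℕ | ∃ τ, (SG N).Reach (m, τ)}.Finite

/-!
The simulating TPN holds the current marking `m` of `N` as a token on `cur m`, and for every
transition `k` enabled in `N` a token on `clock k (h k)`, where `h k` is the marking at which the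
firing date of `k` was drawn. The silent transition `commit k mh` carries the static interval
`Is k mh` of `N`; its only input place is `clock k mh`, so it keeps its date exactly as long as
`k` is persistent in `N`, which is what the trivial `Id` of a weak DTPN demands. When the date
elapses, `commit k mh` moves the token to `due k`, and the labelled transition `fire t mc src`,
with interval `[0, 0]`, fires `t` from `cur mc`: it removes the tokens of the transitions that `t`
disables, from `clock k mh` or from `due k` as `src k` says, and puts fresh tokens on
`clock k m'` for the transitions restarted at the new marking `m'`. A reachable state of `N`
is related to its encodings `enc s h F`, where `F` is the set of committed transitions (their
date is `0`). Finiteness of the reachable markings makes the net finite.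
-/

namespace TimeInterval

/-- `[x, x]`, clipped at `0` so that the left endpoint is nonnegative. -/
def pt (x : ℝ) : TimeInterval :=
  ⟨max x 0, ((max x 0 : ℝ) : EReal), le_max_right _ _, le_rfl⟩

theorem mem_pt_iff {x y : ℝ} : (pt x).mem y ↔ y = max x 0 := by
  simp only [pt, mem, EReal.coe_le_coe_iff, le_antisymm_iff, and_comm]

theorem mem.nonneg {I : TimeInterval} {x : ℝ} (h : I.mem x) : 0 ≤ x :=
  I.lo_nonneg.trans h.1

theorem lo_mem (I : TimeInterval) : I.mem I.lo :=
  ⟨le_rfl, I.lo_le_hi⟩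

end TimeInterval

theorem TTS.Reach.step {S L : Type} {A : TTS S L} {s s' : S} {l : L} (hs : A.Reach s)
    (h : A.step s l s') : A.Reach s' :=
  let ⟨s₀, h₀, hr⟩ := hs
  ⟨s₀, h₀, hr.tail ⟨l, h⟩⟩

section Nets

variable {N : DTPN P T}

theorem exists_initState (N : DTPN P T) : ∃ τ, initState N (N.m0, τ) :=
  ⟨fun t => if enabled N N.m0 t then (N.Is t N.m0).lo else 0, rfl,
    fun t ht => by simpa only [if_pos ht] using (N.Is t N.m0).lo_mem,
    fun t ht => if_neg ht⟩

theorem enabled_fire_of_pers {m : P → ℕ} {t k : T} (hk : pers N m t k) :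
    enabled N (fire N m t) k :=
  fun p => (hk.2.2 p).trans (Nat.le_add_right _ _)

theorem discStep.clock_eq_of_pers (hN : TrivialIdyn N) {s s' : NState P T} {t k : T}
    (hs : discStep N s t s') (hk : pers N s.1 t k) (h0 : 0 ≤ s.2 k) : s'.2 k = s.2 k :=
  (hN k s'.1 (s.2 k) (s'.2 k) h0).1 (hs.2.2.2.1 k hk)

theorem exists_discStep {s : NState P T} {t : T} (ht : enabled N s.1 t) (h0 : s.2 t = 0) :
    ∃ τ', discStep N s t (fire N s.1 t, τ') := by
  refine ⟨fun k => if pers N s.1 t k then (N.Idyn k (fire N s.1 t) (s.2 k)).lo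
      else if enabled N (fire N s.1 t) k then (N.Is k (fire N s.1 t)).lo else 0,
    ht, h0, rfl, fun k hk => ?_, fun k hk hnp => ?_, fun k hk => ?_⟩
  · simpa [hk] using TimeInterval.lo_mem _
  · simpa [hk, hnp] using TimeInterval.lo_mem _
  · have hnp : ¬ pers N s.1 t k := fun hp => hk (enabled_fire_of_pers hp)
    simp_all

theorem clock_nonneg_of_reach {s : NState P T} (hs : (SG N).Reach s) :
    ∀ k, enabled N s.1 k → 0 ≤ s.2 k := by
  obtain ⟨⟨m₀, τ₀⟩, ⟨rfl, hIs, -⟩, hr⟩ := hs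
  rcases hr.cases_tail with rfl | ⟨s₀, -, l, hstep⟩
  · exact fun k hk => (hIs k hk).nonneg
  cases l with
  | disc t =>
    obtain ⟨-, -, -, hpers, hnew, -⟩ := hstep
    intro k hk
    by_cases hp : pers N s₀.1 t k
    exacts [(hpers k hp).nonneg, (hnew k hk hp).nonneg]
  | delay θ =>
    obtain ⟨-, hθ, hm, hτ⟩ := hstep
    rw [hm, hτ]
    exact fun k hk => by simpa [hk] using hθ k hk
  | silent => exact hstep.elim

end Nets

section IndicatorMarkings

variable {N : DTPN P T} {pre post : T → Set P} {S : Set P}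

theorem indicator_sub_indicator (S I : Set P) :
    S.indicator (1 : P → ℕ) - I.indicator 1 = (S \ I).indicator 1 := by
  ext p
  by_cases hS : p ∈ S <;> by_cases hI : p ∈ I <;> simp [hS, hI]

theorem enabled_indicator_iff (hpre : ∀ t, N.Pre t = (pre t).indicator 1) {t : T} :
    enabled N (S.indicator 1) t ↔ pre t ⊆ S := by
  refine ⟨fun h p hp => ?_, fun h p => ?_⟩
  · by_contra hS
    simpa [hpre, hp, hS] using h p
  · by_cases hp : p ∈ pre t
    · simp [hpre, hp, h hp]
    · simp [hpre, hp]

theorem pers_indicator_iff (hpre : ∀ t, N.Pre t = (pre t).indicator 1) {t k : T} :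
    pers N (S.indicator 1) t k ↔ k ≠ t ∧ pre k ⊆ S \ pre t := by
  have hsub : (∀ p, N.Pre k p ≤ S.indicator 1 p - N.Pre t p) ↔ pre k ⊆ S \ pre t := by
    rw [← enabled_indicator_iff hpre, ← indicator_sub_indicator, ← hpre]; rfl
  rw [pers, hsub, enabled_indicator_iff hpre]
  exact ⟨fun h => ⟨h.1, h.2.2⟩, fun h => ⟨h.1, h.2.trans Set.sdiff_subset, h.2⟩⟩

theorem fire_indicator (hpre : ∀ t, N.Pre t = (pre t).indicator 1)
    (hpost : ∀ t, N.Post t = (post t).indicator 1) {t : T}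
    (hdisj : Disjoint (post t) (S \ pre t)) :
    fire N (S.indicator 1) t = (S \ pre t ∪ post t).indicator 1 := by
  ext p
  have hsub := congrFun (indicator_sub_indicator S (pre t)) p
  simp only [Pi.sub_apply, ← hpre] at hsub
  rw [fire, hsub, hpost]
  by_cases hd : p ∈ S \ pre t <;> by_cases hq : p ∈ post t
  · exact absurd hd (Set.disjoint_left.1 hdisj hq)
  all_goals simp [hd, hq]

end IndicatorMarkings

namespace SimNet

abbrev ReachMarking (N : DTPN P T) : Type := ↥{m : P → ℕ | ∃ τ, (SG N).Reach (m, τ)}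

variable {N : DTPN P T}

def initMarking (N : DTPN P T) : ReachMarking N :=
  ⟨N.m0, (exists_initState N).imp fun _ h => ⟨_, h, .refl⟩⟩

inductive Place (N : DTPN P T) : Type
  | cur : ReachMarking N → Place N
  | clock : T → ReachMarking N → Place N
  | due : T → Place N

inductive Trans (N : DTPN P T) : Type
  | commit : T → ReachMarking N → Trans N
  | fire : T → ReachMarking N → (T → Option (ReachMarking N)) → Trans N

def Place.equivSum : Place N ≃ ReachMarking N ⊕ (T × ReachMarking N) ⊕ T where
  toFun
    | .cur m => .inl m
    | .clock k mh => .inr (.inl (k, mh))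
    | .due k => .inr (.inr k)
  invFun
    | .inl m => .cur m
    | .inr (.inl (k, mh)) => .clock k mh
    | .inr (.inr k) => .due k
  left_inv p := by cases p <;> rfl
  right_inv p := by rcases p with _ | _ | _ <;> rfl

def Trans.equivSum :
    Trans N ≃ (T × ReachMarking N) ⊕
      (T × ReachMarking N × (T → Option (ReachMarking N))) where
  toFun
    | .commit k mh => .inl (k, mh)
    | .fire t mc src => .inr (t, mc, src)
  invFun
    | .inl (k, mh) => .commit k mh
    | .inr (t, mc, src) => .fire t mc src
  left_inv p := by cases p <;> rfl
  right_inv p := by rcases p with _ | _ <;> rfl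

instance [Finite T] [Finite (ReachMarking N)] : Finite (Place N) :=
  .of_equiv _ Place.equivSum.symm

instance [Finite T] [Finite (ReachMarking N)] : Finite (Trans N) :=
  .of_equiv _ Trans.equivSum.symm

def dropped (N : DTPN P T) (m : P → ℕ) (t : T) : Set T :=
  {k | k ≠ t ∧ enabled N m k ∧ ¬ pers N m t k}

def restarted (N : DTPN P T) (m : P → ℕ) (t : T) : Set T :=
  {k | enabled N (fire N m t) k ∧ ¬ pers N m t k}

def encSet (m : P → ℕ) (h : T → ReachMarking N) (F : Set T) : Set (Place N)
  | .cur m' => m'.1 = m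
  | .clock k mh => enabled N m k ∧ k ∉ F ∧ mh = h k
  | .due k => k ∈ F

def firePreSet (t : T) (mc : ReachMarking N) (src : T → Option (ReachMarking N)) :
    Set (Place N)
  | .cur m' => m' = mc
  | .clock k mh => k ∈ dropped N mc.1 t ∧ src k = some mh
  | .due k => k = t ∨ k ∈ dropped N mc.1 t ∧ src k = none

def firePostSet (t : T) (mc : ReachMarking N) : Set (Place N)
  | .cur m' => m'.1 = fire N mc.1 t
  | .clock k mh => k ∈ restarted N mc.1 t ∧ mh.1 = fire N mc.1 t
  | .due _ => False

def preSet : Trans N → Set (Place N)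
  | .commit k mh => {.clock k mh}
  | .fire t mc src => firePreSet t mc src

def postSet : Trans N → Set (Place N)
  | .commit k _ => {.due k}
  | .fire t mc _ => firePostSet t mc

def net (N : DTPN P T) : DTPN (Place N) (Trans N) where
  Pre tr := (preSet tr).indicator 1
  Post tr := (postSet tr).indicator 1
  m0 := (encSet N.m0 (fun _ => initMarking N) ∅).indicator 1
  Is tr _ := match tr with
    | .commit k mh => N.Is k mh.1
    | .fire .. => .pt 0
  Idyn _ _ θ := .pt θ

def label : Trans N → Option T
  | .commit .. => none
  | .fire t .. => some t

theorem isTPN_net (N : DTPN P T) : IsTPN (net N) :=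
  ⟨fun _ _ _ _ hθ => by rw [net, TimeInterval.mem_pt_iff, max_eq_left hθ], fun _ _ _ => rfl⟩

def encClock (m : P → ℕ) (h : T → ReachMarking N) (F : Set T) (τ : T → ℝ) :
    Trans N → ℝ
  | .commit k mh => if Place.clock k mh ∈ encSet m h F then τ k else 0
  | .fire .. => 0

def enc (s : NState P T) (h : T → ReachMarking N) (F : Set T) : NState (Place N) (Trans N) :=
  ((encSet s.1 h F).indicator 1, encClock s.1 h F s.2)

def canonicalSrc (h : T → ReachMarking N) (F : Set T) (k : T) : Option (ReachMarking N) :=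
  if k ∈ F then none else some (h k)

section Encoding

variable {m : P → ℕ} {h : T → ReachMarking N} {F : Set T} {t k : T} {mc mh : ReachMarking N}
  {src : T → Option (ReachMarking N)}

@[simp] theorem cur_mem_encSet {m' : ReachMarking N} :
    Place.cur m' ∈ encSet m h F ↔ m'.1 = m := Iff.rfl

@[simp] theorem clock_mem_encSet :
    Place.clock k mh ∈ encSet m h F ↔ enabled N m k ∧ k ∉ F ∧ mh = h k := Iff.rfl

@[simp] theorem due_mem_encSet : Place.due k ∈ encSet (N := N) m h F ↔ k ∈ F := Iff.rfl

@[simp] theorem cur_mem_firePreSet {m' : ReachMarking N} :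
    Place.cur m' ∈ firePreSet t mc src ↔ m' = mc := Iff.rfl

@[simp] theorem clock_mem_firePreSet :
    Place.clock k mh ∈ firePreSet t mc src ↔ k ∈ dropped N mc.1 t ∧ src k = some mh :=
  Iff.rfl

@[simp] theorem due_mem_firePreSet :
    Place.due k ∈ firePreSet t mc src ↔ k = t ∨ k ∈ dropped N mc.1 t ∧ src k = none :=
  Iff.rfl

@[simp] theorem cur_mem_firePostSet {m' : ReachMarking N} :
    Place.cur m' ∈ firePostSet t mc ↔ m'.1 = fire N mc.1 t := Iff.rfl

@[simp] theorem clock_mem_firePostSet :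
    Place.clock k mh ∈ firePostSet t mc ↔ k ∈ restarted N mc.1 t ∧ mh.1 = fire N mc.1 t :=
  Iff.rfl

@[simp] theorem due_not_mem_firePostSet : Place.due k ∉ firePostSet t mc := id

@[simp] theorem canonicalSrc_eq_none : canonicalSrc h F k = none ↔ k ∈ F := by
  simp [canonicalSrc]

@[simp] theorem canonicalSrc_eq_some : canonicalSrc h F k = some mh ↔ k ∉ F ∧ h k = mh := by
  simp [canonicalSrc]

theorem net_pre (tr : Trans N) : (net N).Pre tr = (preSet tr).indicator 1 := rfl

theorem net_post (tr : Trans N) : (net N).Post tr = (postSet tr).indicator 1 := rfl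

theorem net_m0 : (net N).m0 = (encSet N.m0 (fun _ => initMarking N) ∅).indicator 1 := rfl

theorem enabled_commit_iff :
    enabled (net N) ((encSet m h F).indicator 1) (.commit k mh) ↔
      Place.clock k mh ∈ encSet m h F :=
  (enabled_indicator_iff net_pre).trans Set.singleton_subset_iff

theorem enabled_fire_iff :
    enabled (net N) ((encSet m h F).indicator 1) (.fire t mc src) ↔
      firePreSet t mc src ⊆ encSet m h F :=
  enabled_indicator_iff net_pre

theorem canonical_firePreSet_subset (hmc : mc.1 = m) (ht : t ∈ F) :
    firePreSet t mc (canonicalSrc h F) ⊆ encSet m h F := by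
  rintro (m' | ⟨k, mh⟩ | k) hp
  · simp_all
  · simp only [clock_mem_firePreSet, canonicalSrc_eq_some, dropped] at hp
    simp_all
  · simp only [due_mem_firePreSet, canonicalSrc_eq_none] at hp
    simp only [due_mem_encSet]
    rcases hp with rfl | ⟨-, hk⟩ <;> assumption

theorem firePreSet_eq_canonical (hsub : firePreSet t mc src ⊆ encSet m h F) :
    firePreSet t mc src = firePreSet t mc (canonicalSrc h F) := by
  have hsome {k mh} (hk : k ∈ dropped N mc.1 t) (hs : src k = some mh) : k ∉ F ∧ mh = h k :=
    (hsub (show Place.clock k mh ∈ _ from ⟨hk, hs⟩)).2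
  have hnone {k} (hk : k ∈ dropped N mc.1 t) : src k = none ↔ k ∈ F := by
    refine ⟨fun hs => hsub (show Place.due k ∈ _ from .inr ⟨hk, hs⟩), fun hkF => ?_⟩
    cases hs : src k with
    | none => rfl
    | some mh => exact ((hsome hk hs).1 hkF).elim
  ext (m' | ⟨k, mh⟩ | k)
  · rfl
  · simp only [clock_mem_firePreSet, canonicalSrc_eq_some, and_congr_right_iff]
    intro hk
    cases hs : src k with
    | none => simp [(hnone hk).1 hs]
    | some mh' =>
      obtain ⟨hkF, rfl⟩ := hsome hk hs
      simp [hkF, eq_comm]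
  · simp only [due_mem_firePreSet, canonicalSrc_eq_none]
    exact or_congr_right (and_congr_right fun hk => hnone hk)

theorem fire_net_commit (htF : t ∉ F) :
    fire (net N) ((encSet m h F).indicator 1) (.commit t (h t)) =
      (encSet m h (insert t F)).indicator 1 := by
  rw [fire_indicator net_pre net_post]
  · congr 1
    ext (m' | ⟨k, mh⟩ | k)
    · simp [preSet, postSet]
    · by_cases hk : k = t
      · subst hk; simp [preSet, postSet]
      · simp [preSet, postSet, hk]
    · by_cases hk : k = t <;> simp [preSet, postSet, hk]
  · simp [preSet, postSet, htF]

theorem pers_net_commit_iff {S : Set (Place N)} {tr : Trans N} :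
    pers (net N) (S.indicator 1) tr (.commit k mh) ↔
      .commit k mh ≠ tr ∧ Place.clock k mh ∈ S ∧ Place.clock k mh ∉ preSet tr := by
  rw [pers_indicator_iff net_pre]
  simp [preSet]

theorem mem_dropped_iff (hkt : k ≠ t) (hk : enabled N m k) :
    k ∈ dropped N m t ↔ ¬ pers N m t k :=
  ⟨fun h => h.2.2, fun h => ⟨hkt, hk, h⟩⟩

theorem clock_mem_sdiff_firePreSet_iff (ht : t ∈ F) :
    Place.clock k mh ∈ encSet mc.1 h F \ firePreSet t mc (canonicalSrc h F) ↔
      Place.clock k mh ∈ encSet mc.1 h F ∧ pers N mc.1 t k := by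
  simp only [Set.mem_sdiff, clock_mem_firePreSet, canonicalSrc_eq_some, and_congr_right_iff]
  rintro ⟨hk, hkF, rfl⟩
  have hkt : k ≠ t := by rintro rfl; exact hkF ht
  simp [mem_dropped_iff hkt hk, hkF]

theorem pers_net_fire_iff (hsub : firePreSet t mc src ⊆ encSet mc.1 h F) :
    pers (net N) ((encSet mc.1 h F).indicator 1) (.fire t mc src) (.commit k mh) ↔
      Place.clock k mh ∈ encSet mc.1 h F ∧ pers N mc.1 t k := by
  have ht : t ∈ F := hsub (show Place.due t ∈ _ from .inl rfl)
  rw [pers_net_commit_iff, preSet, firePreSet_eq_canonical hsub, ← Set.mem_sdiff,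
    clock_mem_sdiff_firePreSet_iff ht]
  exact and_iff_right nofun

theorem encSet_sdiff_firePreSet_union (hF : ∀ k ∈ F, enabled N mc.1 k) (ht : t ∈ F)
    {mn : ReachMarking N} (hmn : mn.1 = fire N mc.1 t) :
    encSet mc.1 h F \ firePreSet t mc (canonicalSrc h F) ∪ firePostSet t mc =
      encSet mn.1 ((restarted N mc.1 t).piecewise (fun _ => mn) h) {k ∈ F | pers N mc.1 t k} := by
  ext (m' | ⟨k, mh⟩ | k)
  · simp [Subtype.ext_iff, hmn]
  · rw [Set.mem_union, clock_mem_sdiff_firePreSet_iff ht, clock_mem_firePostSet,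
      clock_mem_encSet, clock_mem_encSet, hmn]
    by_cases hr : k ∈ restarted N mc.1 t
    · have hnp : ¬ pers N mc.1 t k := hr.2
      simp [hr, hr.1, hnp, Subtype.ext_iff, hmn]
    · have hpers : enabled N (fire N mc.1 t) k ↔ pers N mc.1 t k :=
        ⟨fun hk => not_not.1 fun hnp => hr ⟨hk, hnp⟩, enabled_fire_of_pers⟩
      simp only [Set.piecewise_eq_of_notMem _ _ _ hr, hr, hpers, false_and, or_false,
        Set.mem_sep_iff, not_and]
      exact ⟨fun ⟨⟨_, hkF, hmh⟩, hp⟩ => ⟨hp, fun h => (hkF h).elim, hmh⟩,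
        fun ⟨hp, hkF, hmh⟩ => ⟨⟨hp.2.1, fun h => hkF h hp, hmh⟩, hp⟩⟩
  · simp only [Set.mem_union, Set.mem_sdiff, due_mem_encSet, due_mem_firePreSet,
      canonicalSrc_eq_none, due_not_mem_firePostSet, or_false, Set.mem_sep_iff,
      and_congr_right_iff]
    intro hkF
    by_cases hkt : k = t
    · simp [hkt, pers]
    · simp [hkt, mem_dropped_iff hkt (hF k hkF), hkF]

theorem fire_net_fire (hF : ∀ k ∈ F, enabled N mc.1 k)
    (hsub : firePreSet t mc src ⊆ encSet mc.1 h F) {mn : ReachMarking N}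
    (hmn : mn.1 = fire N mc.1 t) :
    fire (net N) ((encSet mc.1 h F).indicator 1) (.fire t mc src) =
      (encSet mn.1 ((restarted N mc.1 t).piecewise (fun _ => mn) h)
        {k ∈ F | pers N mc.1 t k}).indicator 1 := by
  have ht : t ∈ F := hsub (show Place.due t ∈ _ from .inl rfl)
  have hpre : preSet (.fire t mc src) = firePreSet t mc (canonicalSrc h F) :=
    firePreSet_eq_canonical hsub
  rw [fire_indicator net_pre net_post, hpre, postSet, encSet_sdiff_firePreSet_union hF ht hmn]
  rw [hpre, postSet, Set.disjoint_left]
  rintro (m' | ⟨k, mh⟩ | k) hpost hold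
  · exact hold.2 (Subtype.ext hold.1)
  · exact hpost.1.2 ((clock_mem_sdiff_firePreSet_iff ht).1 hold).2
  · exact hpost

theorem encClock_eq_zero_of_not_enabled {τ : T → ℝ} {tr : Trans N}
    (htr : ¬ enabled (net N) ((encSet m h F).indicator 1) tr) : encClock m h F τ tr = 0 := by
  cases tr with
  | commit k mh => exact if_neg fun hk => htr (enabled_commit_iff.2 hk)
  | fire => rfl

theorem eq_encClock {C : Trans N → ℝ} {τ : T → ℝ}
    (hdis : ∀ tr, ¬ enabled (net N) ((encSet m h F).indicator 1) tr → C tr = 0)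
    (hfire : ∀ t mc src, C (.fire t mc src) = 0)
    (hclock : ∀ k, Place.clock k (h k) ∈ encSet m h F → C (.commit k (h k)) = τ k) :
    C = encClock m h F τ := by
  funext tr
  rcases tr with ⟨k, mh⟩ | ⟨t, mc, src⟩
  · by_cases hk : Place.clock k mh ∈ encSet m h F
    · obtain ⟨-, -, rfl⟩ := id hk
      rw [hclock k hk, encClock, if_pos hk]
    · rw [hdis _ (mt enabled_commit_iff.1 hk), encClock, if_neg hk]
  · exact hfire t mc src

theorem discStep_net_fire_clock {s : NState P T} {tr : Trans N}
    {s₂' : NState (Place N) (Trans N)} (hd : discStep (net N) (enc s h F) tr s₂')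
    (t : T) (mc : ReachMarking N) (src : T → Option (ReachMarking N)) :
    s₂'.2 (.fire t mc src) = 0 := by
  obtain ⟨-, -, -, hpers, hnew, hdis⟩ := hd
  by_cases hp : pers (net N) (enc s h F).1 tr (.fire t mc src)
  · simpa [net, enc, encClock, TimeInterval.mem_pt_iff] using hpers _ hp
  by_cases hen : enabled (net N) s₂'.1 (.fire t mc src)
  · simpa [net, TimeInterval.mem_pt_iff] using hnew _ hen hp
  · exact hdis _ hen

theorem discStep_net_enc {s s' : NState P T} {h' : T → ReachMarking N} {F' : Set T}
    {tr : Trans N} (hs : ∀ k, enabled N s.1 k → 0 ≤ s.2 k)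
    (hen : enabled (net N) ((encSet s.1 h F).indicator 1) tr)
    (h0 : encClock s.1 h F s.2 tr = 0)
    (hm : fire (net N) ((encSet s.1 h F).indicator 1) tr = (encSet s'.1 h' F').indicator 1)
    (hpers : ∀ k, Place.clock k (h k) ∈ encSet s.1 h F →
      pers (net N) ((encSet s.1 h F).indicator 1) tr (.commit k (h k)) →
      encClock s'.1 h' F' s'.2 (.commit k (h k)) = s.2 k)
    (hnew : ∀ k, Place.clock k (h' k) ∈ encSet s'.1 h' F' →
      ¬ pers (net N) ((encSet s.1 h F).indicator 1) tr (.commit k (h' k)) →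
      (N.Is k (h' k).1).mem (s'.2 k)) :
    discStep (net N) (enc s h F) tr (enc s' h' F') := by
  refine ⟨hen, h0, hm.symm, ?_, ?_, fun tr' htr' => encClock_eq_zero_of_not_enabled htr'⟩
  · rintro (⟨k, mh⟩ | _) hp
    · have hk := (pers_net_commit_iff.1 hp).2.1
      obtain ⟨hkm, -, rfl⟩ := id hk
      simp only [net, enc, TimeInterval.mem_pt_iff, encClock, if_pos hk]
      rw [← encClock, hpers k hk hp, max_eq_left (hs k hkm)]
    · simp [net, enc, encClock, TimeInterval.mem_pt_iff]
  · rintro (⟨k, mh⟩ | _) hen' hp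
    · have hk := enabled_commit_iff.1 hen'
      obtain ⟨-, -, rfl⟩ := id hk
      simpa only [net, enc, encClock, if_pos hk] using hnew k hk hp
    · simp [net, enc, encClock, TimeInterval.mem_pt_iff]

theorem eq_enc_of_discStep_net {s s' : NState P T} {h' : T → ReachMarking N} {F' : Set T}
    {tr : Trans N} {s₂' : NState (Place N) (Trans N)} (hd : discStep (net N) (enc s h F) tr s₂')
    (hm : s₂'.1 = (encSet s'.1 h' F').indicator 1)
    (hclock : ∀ k, Place.clock k (h' k) ∈ encSet s'.1 h' F' →
      s₂'.2 (.commit k (h' k)) = s'.2 k) :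
    s₂' = enc s' h' F' :=
  Prod.ext hm <| eq_encClock (fun tr' htr' => hd.2.2.2.2.2 tr' (hm ▸ htr'))
    (discStep_net_fire_clock hd) hclock

theorem discStep_net_clock_of_pers {s : NState P T} {tr : Trans N}
    {s₂' : NState (Place N) (Trans N)} (hs : ∀ k, enabled N s.1 k → 0 ≤ s.2 k)
    (hd : discStep (net N) (enc s h F) tr s₂') (hk : Place.clock k (h k) ∈ encSet s.1 h F)
    (hp : pers (net N) (enc s h F).1 tr (.commit k (h k))) : s₂'.2 (.commit k (h k)) = s.2 k := by
  have hold : (enc s h F).2 (.commit k (h k)) = s.2 k := if_pos hk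
  rw [discStep.clock_eq_of_pers (isTPN_net N).1 hd hp (hold ▸ hs k hk.1), hold]

theorem discStep_net_commit {s : NState P T} (hs : ∀ k, enabled N s.1 k → 0 ≤ s.2 k)
    (ht : enabled N s.1 t) (htF : t ∉ F) (ht0 : s.2 t = 0) :
    discStep (net N) (enc s h F) (.commit t (h t)) (enc s h (insert t F)) := by
  have hmem : Place.clock t (h t) ∈ encSet s.1 h F := ⟨ht, htF, rfl⟩
  refine discStep_net_enc hs (enabled_commit_iff.2 hmem) (by simp [encClock, hmem, ht0])
    (fire_net_commit htF) (fun k hk hp => ?_) (fun k hk hp => ?_)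
  · have hkt : k ≠ t := by rintro rfl; exact (pers_net_commit_iff.1 hp).1 rfl
    simp [encClock, hk.1, hkt, hk.2.1]
  · simp only [clock_mem_encSet, Set.mem_insert_iff, not_or] at hk
    refine (hp (pers_net_commit_iff.2 ⟨?_, ⟨hk.1, hk.2.1.2, rfl⟩, ?_⟩)).elim <;>
      simp [preSet, hk.2.1.1]

theorem of_discStep_net_commit {s : NState P T} {s₂' : NState (Place N) (Trans N)}
    (hs : ∀ k, enabled N s.1 k → 0 ≤ s.2 k)
    (hd : discStep (net N) (enc s h F) (.commit t mh) s₂') :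
    (enabled N s.1 t ∧ t ∉ F ∧ s.2 t = 0) ∧ s₂' = enc s h (insert t F) := by
  obtain ⟨ht, htF, rfl⟩ := enabled_commit_iff.1 hd.1
  have hmem : Place.clock t (h t) ∈ encSet s.1 h F := ⟨ht, htF, rfl⟩
  have ht0 : s.2 t = 0 := by simpa [enc, encClock, hmem] using hd.2.1
  refine ⟨⟨ht, htF, ht0⟩, eq_enc_of_discStep_net hd (hd.2.2.1.trans (fire_net_commit htF))
    fun k hk => ?_⟩
  simp only [clock_mem_encSet, Set.mem_insert_iff, not_or] at hk
  refine discStep_net_clock_of_pers hs hd ⟨hk.1, hk.2.1.2, rfl⟩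
    (pers_net_commit_iff.2 ⟨?_, ⟨hk.1, hk.2.1.2, rfl⟩, ?_⟩) <;> simp [preSet, hk.2.1.1]

theorem clock_mem_encSet_of_pers (hp : pers N mc.1 t k) (hkF : k ∉ F) {mn : ReachMarking N} :
    Place.clock k (h k) ∈ encSet (fire N mc.1 t) ((restarted N mc.1 t).piecewise (fun _ => mn) h)
      {k ∈ F | pers N mc.1 t k} := by
  rw [clock_mem_encSet, Set.piecewise_eq_of_notMem _ _ _ fun hr => hr.2 hp]
  exact ⟨enabled_fire_of_pers hp, fun h => hkF h.1, rfl⟩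

theorem mem_restarted_of_not_pers_net (hsub : firePreSet t mc src ⊆ encSet mc.1 h F)
    {mn : ReachMarking N}
    (hk : Place.clock k ((restarted N mc.1 t).piecewise (fun _ => mn) h k) ∈
      encSet (fire N mc.1 t) ((restarted N mc.1 t).piecewise (fun _ => mn) h)
        {k ∈ F | pers N mc.1 t k})
    (hp : ¬ pers (net N) ((encSet mc.1 h F).indicator 1) (.fire t mc src)
      (.commit k ((restarted N mc.1 t).piecewise (fun _ => mn) h k))) :
    k ∈ restarted N mc.1 t := by
  by_contra hr
  rw [Set.piecewise_eq_of_notMem _ _ _ hr] at hk hp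
  obtain ⟨hk', hkF, -⟩ := hk
  have hpers : pers N mc.1 t k := not_not.1 fun hnp => hr ⟨hk', hnp⟩
  exact hp ((pers_net_fire_iff hsub).2
    ⟨⟨hpers.2.1, fun h => hkF ⟨h, hpers⟩, rfl⟩, hpers⟩)

theorem discStep_net_fire (hweak : TrivialIdyn N) {s s' : NState P T}
    (hs : ∀ k, enabled N s.1 k → 0 ≤ s.2 k)
    (hF : ∀ k ∈ F, enabled N s.1 k) (ht : t ∈ F) (hd : discStep N s t s')
    (hmc : mc.1 = s.1) {mn : ReachMarking N} (hmn : mn.1 = s'.1) :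
    discStep (net N) (enc s h F) (.fire t mc (canonicalSrc h F))
      (enc s' ((restarted N s.1 t).piecewise (fun _ => mn) h) {k ∈ F | pers N s.1 t k}) := by
  obtain ⟨m, τ⟩ := s
  dsimp only at hmc hF hd ⊢
  subst hmc
  have hsub : firePreSet t mc (canonicalSrc h F) ⊆ encSet mc.1 h F :=
    canonical_firePreSet_subset rfl ht
  have hm' : s'.1 = fire N mc.1 t := hd.2.2.1
  refine discStep_net_enc hs (enabled_fire_iff.2 hsub) rfl
    (hmn ▸ fire_net_fire hF hsub (hmn.trans hm')) (fun k hk hp => ?_) (fun k hk hp => ?_)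
  · have hpers := ((pers_net_fire_iff hsub).1 hp).2
    rw [encClock, hm', if_pos (clock_mem_encSet_of_pers hpers hk.2.1)]
    exact hd.clock_eq_of_pers hweak hpers (hs k hk.1)
  · rw [hm'] at hk
    have hr := mem_restarted_of_not_pers_net hsub hk hp
    rw [Set.piecewise_eq_of_mem _ _ _ hr, hmn]
    exact hd.2.2.2.2.1 k (hm' ▸ hr.1) hr.2

theorem of_discStep_net_fire (hweak : TrivialIdyn N) {s : NState P T}
    {s₂' : NState (Place N) (Trans N)} (hs : ∀ k, enabled N s.1 k → 0 ≤ s.2 k)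
    (hF : ∀ k ∈ F, enabled N s.1 k ∧ s.2 k = 0)
    (hd : discStep (net N) (enc s h F) (.fire t mc src) s₂') {mn : ReachMarking N}
    (hmn : mn.1 = fire N s.1 t) :
    t ∈ F ∧ ∃ τ', discStep N s t (fire N s.1 t, τ') ∧
      s₂' = enc (fire N s.1 t, τ') ((restarted N s.1 t).piecewise (fun _ => mn) h)
        {k ∈ F | pers N s.1 t k} := by
  have hsub := enabled_fire_iff.1 hd.1
  have hmc : mc.1 = s.1 := hsub (show Place.cur mc ∈ _ from rfl)
  have ht : t ∈ F := hsub (show Place.due t ∈ _ from .inl rfl)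
  obtain ⟨m, τ⟩ := s
  dsimp only at hmc hF hmn hs ⊢
  subst hmc
  set h' := (restarted N mc.1 t).piecewise (fun _ => mn) h
  set F' := {k ∈ F | pers N mc.1 t k}
  have hm : s₂'.1 = (encSet (fire N mc.1 t) h' F').indicator 1 :=
    hd.2.2.1.trans (hmn ▸ fire_net_fire (fun k hk => (hF k hk).1) hsub hmn)
  set τ' : T → ℝ := fun k =>
    if Place.clock k (h' k) ∈ encSet (fire N mc.1 t) h' F' then s₂'.2 (.commit k (h' k)) else 0
  refine ⟨ht, τ', ⟨(hF t ht).1, (hF t ht).2, rfl, fun k hp => ?_, fun k hk hnp => ?_,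
    fun k hk => if_neg fun h => hk h.1⟩,
    eq_enc_of_discStep_net hd hm fun k hk => (if_pos hk).symm⟩
  · have hr : k ∉ restarted N mc.1 t := fun hr => hr.2 hp
    rw [hweak _ _ _ _ (hs k hp.2.1)]
    by_cases hkF : k ∈ F
    · exact (if_neg fun h => h.2.1 ⟨hkF, hp⟩).trans (hF k hkF).2.symm
    · simp only [τ', h', Set.piecewise_eq_of_notMem _ _ _ hr]
      rw [if_pos (clock_mem_encSet_of_pers hp hkF)]
      exact discStep_net_clock_of_pers hs hd ⟨hp.2.1, hkF, rfl⟩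
        ((pers_net_fire_iff hsub).2 ⟨⟨hp.2.1, hkF, rfl⟩, hp⟩)
  · have hr : k ∈ restarted N mc.1 t := ⟨hk, hnp⟩
    have hk' : Place.clock k (h' k) ∈ encSet (fire N mc.1 t) h' F' :=
      ⟨hk, fun h => hnp h.2, rfl⟩
    have hnp' : ¬ pers (net N) (enc (mc.1, τ) h F).1 (.fire t mc src) (.commit k (h' k)) :=
      fun hp => hnp ((pers_net_fire_iff hsub).1 hp).2
    have hIs := hd.2.2.2.2.1 _ (hm ▸ enabled_commit_iff.2 hk') hnp'
    simp only [τ', if_pos hk']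
    simpa [net, h', Set.piecewise_eq_of_mem _ _ _ hr, hmn] using hIs

theorem delayStep_net_enc_iff {s : NState P T} (hreach : (SG N).Reach s)
    (hF : ∀ k ∈ F, enabled N s.1 k ∧ s.2 k = 0) {θ : ℝ}
    {s₂' : NState (Place N) (Trans N)} :
    delayStep (net N) (enc s h F) θ s₂' ↔
      ∃ s', delayStep N s θ s' ∧ s₂' = enc s' h F := by
  -- A committed `k` blocks time in both nets: in `N` its date is `0`, in `net N` the enabled
  -- `fire k` copies have date `0`.
  have hcond : (∀ tr, enabled (net N) (enc s h F).1 tr → θ ≤ (enc s h F).2 tr) ↔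
      ∀ k, enabled N s.1 k → θ ≤ s.2 k := by
    refine ⟨fun H k hk => ?_, fun H => ?_⟩
    · by_cases hkF : k ∈ F
      · have hfire := H (.fire k ⟨s.1, s.2, hreach⟩ (canonicalSrc h F))
          (enabled_fire_iff.2 (canonical_firePreSet_subset rfl hkF))
        rwa [(hF k hkF).2]
      · simpa [enc, encClock, hk, hkF] using
          H (.commit k (h k)) (enabled_commit_iff.2 ⟨hk, hkF, rfl⟩)
    · rintro (⟨k, mh⟩ | ⟨t, mc, src⟩) htr
      · have hk := enabled_commit_iff.1 htr
        obtain ⟨hk', -, rfl⟩ := id hk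
        simpa [enc, encClock, hk] using H k hk'
      · have ht : t ∈ F := enabled_fire_iff.1 htr (show Place.due t ∈ _ from .inl rfl)
        exact ((H t (hF t ht).1).trans_eq (hF t ht).2 : θ ≤ 0)
  have hclocks (hθ : 0 ≤ θ) (H : ∀ k, enabled N s.1 k → θ ≤ s.2 k) :
      (fun tr => if enabled (net N) (enc s h F).1 tr then (enc s h F).2 tr - θ else 0) =
        encClock s.1 h F (fun k => if enabled N s.1 k then s.2 k - θ else 0) := by
    refine eq_encClock (fun tr htr => if_neg htr) (fun t mc src => ?_) (fun k hk => ?_)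
    · split_ifs with htr
      · have ht : t ∈ F := enabled_fire_iff.1 htr (show Place.due t ∈ _ from .inl rfl)
        have := H t (hF t ht).1
        simp only [enc, encClock]
        linarith [(hF t ht).2]
      · rfl
    · simp [enabled_commit_iff.2 hk, hk.1, enc, encClock, hk]
  constructor
  · rintro ⟨hθ, hB, hm, hτ⟩
    exact ⟨(s.1, fun k => if enabled N s.1 k then s.2 k - θ else 0),
      ⟨hθ, hcond.1 hB, rfl, rfl⟩,
      Prod.ext hm (hτ.trans (hclocks hθ (hcond.1 hB)))⟩
  · rintro ⟨⟨m', τ'⟩, ⟨hθ, hA, rfl, rfl⟩, rfl⟩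
    exact ⟨hθ, hcond.2 hA, rfl, (hclocks hθ hA).symm⟩

theorem initState_net_enc {s : NState P T} (hinit : initState N s) :
    initState (net N) (enc s (fun _ => initMarking N) ∅) := by
  obtain ⟨m, τ⟩ := s
  obtain ⟨rfl, hIs, -⟩ := hinit
  refine ⟨rfl, ?_, fun tr htr => encClock_eq_zero_of_not_enabled htr⟩
  rintro (⟨k, mh⟩ | ⟨t, mc, src⟩) htr
  · have hk := enabled_commit_iff.1 htr
    obtain ⟨hk', -, rfl⟩ := id hk
    simpa [enc, encClock, hk', net, initMarking] using hIs k hk'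
  · exact (enabled_fire_iff.1 htr (show Place.due t ∈ _ from .inl rfl)).elim

theorem exists_initState_of_net {s₂ : NState (Place N) (Trans N)}
    (hinit : initState (net N) s₂) :
    ∃ s, initState N s ∧ s₂ = enc s (fun _ => initMarking N) ∅ := by
  obtain ⟨hm, hIs, hdis⟩ := hinit
  set τ : T → ℝ := fun k => if enabled N N.m0 k then s₂.2 (.commit k (initMarking N)) else 0
  have hen {k} (hk : enabled N N.m0 k) :
      enabled (net N) (net N).m0 (.commit k (initMarking N)) :=
    enabled_commit_iff.2 ⟨hk, id, rfl⟩
  refine ⟨(N.m0, τ), ⟨rfl, fun k hk => ?_, fun k hk => if_neg hk⟩, Prod.ext hm ?_⟩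
  · simpa [τ, hk, net, initMarking] using hIs _ (hen hk)
  · refine eq_encClock (fun tr htr => hdis tr htr) (fun t mc src => hdis _ ?_)
      (fun k hk => (if_pos hk.1).symm)
    rw [net_m0, enabled_fire_iff]
    exact fun hsub => hsub (show Place.due t ∈ _ from .inl rfl)

end Encoding

section Bisimulation

variable {s s' : NState P T} {F : Set T} {t : T}

theorem due_of_discStep (hweak : TrivialIdyn N) (hs : ∀ k, enabled N s.1 k → 0 ≤ s.2 k)
    (hF : ∀ k ∈ F, enabled N s.1 k ∧ s.2 k = 0) (hd : discStep N s t s') :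
    ∀ k ∈ {k ∈ F | pers N s.1 t k}, enabled N s'.1 k ∧ s'.2 k = 0 := by
  rintro k ⟨hkF, hp⟩
  exact ⟨hd.2.2.1 ▸ enabled_fire_of_pers hp,
    (hd.clock_eq_of_pers hweak hp (hs k hp.2.1)).trans (hF k hkF).2⟩

theorem due_of_delayStep {θ : ℝ} (hF : ∀ k ∈ F, enabled N s.1 k ∧ s.2 k = 0)
    (hd : delayStep N s θ s') : ∀ k ∈ F, enabled N s'.1 k ∧ s'.2 k = 0 := by
  obtain ⟨hθ, hle, hm, hτ⟩ := hd
  intro k hk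
  obtain ⟨hen, h0⟩ := hF k hk
  have hθ0 : θ = 0 := le_antisymm (h0 ▸ hle k hen) hθ
  exact ⟨hm ▸ hen, by simp [hτ, hen, h0, hθ0]⟩

def Rel (N : DTPN P T) (s₁ : NState P T) (s₂ : NState (Place N) (Trans N)) : Prop :=
  (SG N).Reach s₁ ∧
    ∃ h F, (∀ k ∈ F, enabled N s₁.1 k ∧ s₁.2 k = 0) ∧ s₂ = enc s₁ h F

theorem weakSim_rel (hweak : TrivialIdyn N) :
    WeakSim (SG N) (labelledSG (net N) label) (Rel N) := by
  rintro s₁ (t | θ | _) s₁' hstep _ ⟨hreach, h, F, hF, rfl⟩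
  · have hs := clock_nonneg_of_reach hreach
    obtain ⟨F₁, hF₁, ht, hsilent⟩ : ∃ F₁,
        (∀ k ∈ F₁, enabled N s₁.1 k ∧ s₁.2 k = 0) ∧ t ∈ F₁ ∧
          silentSteps (labelledSG (net N) label) (enc s₁ h F) (enc s₁ h F₁) := by
      by_cases htF : t ∈ F
      · exact ⟨F, hF, htF, .refl⟩
      · refine ⟨insert t F, ?_, F.mem_insert t, .single ⟨.commit t (h t), rfl,
          discStep_net_commit hs hstep.1 htF hstep.2.1⟩⟩
        rintro k (rfl | hk)
        exacts [⟨hstep.1, hstep.2.1⟩, hF k hk]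
    let mn : ReachMarking N := ⟨s₁'.1, s₁'.2, hreach.step hstep⟩
    exact ⟨_, ⟨_, hsilent, .fire t ⟨s₁.1, s₁.2, hreach⟩ (canonicalSrc h F₁), rfl,
      discStep_net_fire hweak hs (fun k hk => (hF₁ k hk).1) ht hstep rfl (mn := mn) rfl⟩,
      hreach.step hstep, _, _, due_of_discStep hweak hs hF₁ hstep, rfl⟩
  · exact ⟨_, ⟨_, .refl, (delayStep_net_enc_iff hreach hF).2 ⟨s₁', hstep, rfl⟩⟩,
      hreach.step hstep, h, F, due_of_delayStep hF hstep, rfl⟩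
  · exact hstep.elim

theorem weakSim_flip_rel (hweak : TrivialIdyn N) :
    WeakSim (labelledSG (net N) label) (SG N) (flip (Rel N)) := by
  rintro _ (a | θ | _) s₂' hstep s₁ ⟨hreach, h, F, hF, rfl⟩
  · obtain ⟨⟨t, mh⟩ | ⟨t, mc, src⟩, hl, hd⟩ := hstep
    · cases hl
    obtain rfl : t = a := Option.some_injective _ hl
    have hs := clock_nonneg_of_reach hreach
    have ht : t ∈ F := enabled_fire_iff.1 hd.1 (show Place.due t ∈ _ from .inl rfl)
    obtain ⟨τ, hτ⟩ := exists_discStep (hF t ht).1 (hF t ht).2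
    obtain ⟨-, τ', hA, rfl⟩ :=
      of_discStep_net_fire hweak hs hF hd (mn := ⟨_, τ, hreach.step (l := .disc t) hτ⟩) rfl
    exact ⟨_, ⟨s₁, .refl, hA⟩, hreach.step (l := .disc t) hA, _, _,
      due_of_discStep hweak hs hF hA, rfl⟩
  · obtain ⟨s₁', hA, rfl⟩ := (delayStep_net_enc_iff hreach hF).1 hstep
    exact ⟨s₁', ⟨s₁, .refl, hA⟩, hreach.step (l := .delay θ) hA, h, F,
      due_of_delayStep hF hA, rfl⟩
  · obtain ⟨⟨t, mh⟩ | ⟨t, mc, src⟩, hl, hd⟩ := hstep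
    · obtain ⟨⟨ht, htF, ht0⟩, rfl⟩ :=
        of_discStep_net_commit (clock_nonneg_of_reach hreach) hd
      refine ⟨s₁, .refl, hreach, h, insert t F, ?_, rfl⟩
      rintro k (rfl | hk)
      exacts [⟨ht, ht0⟩, hF k hk]
    · cases hl

theorem bisimilar_net (hweak : TrivialIdyn N) : Bisimilar (SG N) (labelledSG (net N) label) := by
  refine ⟨Rel N, weakSim_rel hweak, weakSim_flip_rel hweak, fun s₁ hs₁ => ?_,
    fun s₂ hs₂ => ?_⟩
  · exact ⟨_, initState_net_enc hs₁, ⟨s₁, hs₁, .refl⟩, _, ∅, by simp, rfl⟩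
  · obtain ⟨s₁, hs₁, rfl⟩ := exists_initState_of_net hs₂
    exact ⟨s₁, hs₁, ⟨s₁, hs₁, .refl⟩, _, ∅, by simp, rfl⟩

end Bisimulation

end SimNet

open SimNet in
theorem weak_DTPN_equiv_TPN_general {P T : Type} [Fintype T]
    (N : DTPN P T) (hweak : TrivialIdyn N) (hfin : FiniteMarkings N) :
    ∃ (P' T' : Type) (_ : Fintype P') (_ : Fintype T') (N' : DTPN P' T')
      (ℓ : T' → Option T),
      IsTPN N' ∧ Bisimilar (SG N) (labelledSG N' ℓ) := by
  have : Finite (ReachMarking N) := hfin.to_subtype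
  exact ⟨Place N, Trans N, .ofFinite _, .ofFinite _, net N, label, isTPN_net N,
    bisimilar_net hweak⟩

/-- **Theorem 1 of the paper.** For every weak DTPN `N` (trivial dynamic
interval function) with a finite set of reachable markings, there is a Time
Petri Net `N'` over finite sets of places and transitions, with a labelling of
its transitions by `T ∪ {τ̂}`, whose labelled state graph is weakly timed
bisimilar to the state graph of `N`. -/
theorem weak_DTPN_equiv_TPN {P T : Type} [Fintype P] [Fintype T]
    (N : DTPN P T) (hweak : TrivialIdyn N) (hfin : FiniteMarkings N) :
    ∃ (P' T' : Type) (_ : Fintype P') (_ : Fintype T') (N' : DTPN P' T')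
      (ℓ : T' → Option T),
      IsTPN N' ∧ Bisimilar (SG N) (labelledSG N' ℓ) :=
  weak_DTPN_equiv_TPN_general N hweak hfin

end
end

section
/- For every Time Petri Net N with a finite set of reachable markings, there exists a 1-safe Time Petri Net N' (every marking reachable in its state graph assigns at most one token to each place), together with a labelling of the transitions of N' by T ∪ {τ̂} (τ̂ silent), such that the state graph of N and the state graph of N' are weakly timed bisimilar. -/
open scoped Classical

noncomputable section

variable {P T P' T' : Type}

/-- `N` is 1-safe: every reachable marking assigns at most one token to each place. -/
def OneSafe {P T : Type} (N : DTPN P T) : Prop :=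
  ∀ s, (SG N).Reach s → ∀ p, s.1 p ≤ 1

/-!
The 1-safe net stores the current marking of `N` as one token on a place indexed by that
marking (there are finitely many), and, for every transition `k` enabled in it, one token on
either a "timer" place or a "due" place of `k`. The clock of `k` sits on a silent transition
moving that token from the timer place to the due place; firing `t` is simulated by an urgent
copy of `t` that consumes the marking place and the due place of `t`, clears the places of the
transitions whose clock `t` resets, and restarts the newly enabled ones. Because `N` is a TPN,
persistent transitions keep their clocks, so a state of `N` is related to its encodings, one for
each set `Z` of due transitions whose timer has already fired; this relation is a weak timed
bisimulation, and encoded markings are 0/1-valued.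
-/

section General

variable {S L : Type}

theorem TimeInterval.nonneg_of_mem {I : TimeInterval} {x : ℝ} (h : I.mem x) : 0 ≤ x :=
  I.lo_nonneg.trans h.1

theorem TTS.Reach.of_step {A : TTS S L} {s s' : S} {l : L} (h : A.Reach s) (hs : A.step s l s') :
    A.Reach s' := by
  obtain ⟨s₀, h₀, hst⟩ := h
  exact ⟨s₀, h₀, hst.tail ⟨l, hs⟩⟩

theorem WeakSim.exists_of_reach {S₁ S₂ : Type} {A : TTS S₁ (TLabel T)} {B : TTS S₂ (TLabel T)}
    {R : S₁ → S₂ → Prop} (hR : WeakSim A B R) (hinit : ∀ s₁ ∈ A.init, ∃ s₂, R s₁ s₂)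
    {s₁ : S₁} (h : A.Reach s₁) : ∃ s₂, R s₁ s₂ := by
  obtain ⟨s₀, h₀, hst⟩ := h
  induction hst with
  | refl => exact hinit s₀ h₀
  | tail _ hstep ih =>
    obtain ⟨l, hl⟩ := hstep
    obtain ⟨s₂, hs₂⟩ := ih
    obtain ⟨s₂', -, hs₂'⟩ := hR _ l _ hl s₂ hs₂
    exact ⟨s₂', hs₂'⟩

theorem reach_labelledSG_of_reach_SG {N : DTPN P' T'} (ℓ : T' → Option T) {s : NState P' T'}
    (h : (SG N).Reach s) : (labelledSG N ℓ).Reach s := by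
  obtain ⟨s₀, h₀, hst⟩ := h
  refine ⟨s₀, h₀, Relation.ReflTransGen.mono (fun x y ⟨l, hl⟩ => ?_) _ _ hst⟩
  match l, hl with
  | .disc t', hl => cases ht : ℓ t' with
    | none => exact ⟨.silent, t', ht, hl⟩
    | some t => exact ⟨.disc t, t', ht, hl⟩
  | .delay θ, hl => exact ⟨.delay θ, hl⟩

end General

namespace OneSafeTPN

section Clocks

variable {N : DTPN P T}

def WellClocked (N : DTPN P T) (s : NState P T) : Prop :=
  (∀ k, ¬ enabled N s.1 k → s.2 k = 0) ∧ ∀ k, 0 ≤ s.2 k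

theorem wellClocked_of_init {s : NState P T} (h : initState N s) : WellClocked N s := by
  obtain ⟨hm, hen, hdis⟩ := h
  refine ⟨fun k hk => hdis k (hm ▸ hk), fun k => ?_⟩
  by_cases hk : enabled N N.m0 k
  · exact TimeInterval.nonneg_of_mem (hen k hk)
  · exact (hdis k hk).ge

theorem wellClocked_of_step {s s' : NState P T} {l : TLabel T} (h : (SG N).step s l s') :
    WellClocked N s' := by
  match l, h with
  | .disc t, ⟨_, _, _, hpers, hnew, hdis⟩ =>
    refine ⟨hdis, fun k => ?_⟩
    by_cases hk : enabled N s'.1 k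
    · by_cases hp : pers N s.1 t k
      · exact TimeInterval.nonneg_of_mem (hpers k hp)
      · exact TimeInterval.nonneg_of_mem (hnew k hk hp)
    · exact (hdis k hk).ge
  | .delay θ, ⟨_, hbound, hm, hν⟩ =>
    refine ⟨fun k hk => by simp only [hν, if_neg (hm ▸ hk)], fun k => ?_⟩
    simp only [hν]
    split_ifs with hk
    · exact sub_nonneg.mpr (hbound k hk)
    · exact le_rfl

theorem wellClocked_of_reach {s : NState P T} (h : (SG N).Reach s) : WellClocked N s := by
  obtain ⟨s₀, h₀, hst⟩ := h
  cases hst.cases_tail with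
  | inl h => exact h ▸ wellClocked_of_init h₀
  | inr h =>
    obtain ⟨_, -, l, hl⟩ := h
    exact wellClocked_of_step hl

def Expired (N : DTPN P T) (s : NState P T) (j : T) : Prop :=
  enabled N s.1 j ∧ s.2 j = 0

theorem Expired.of_delayStep {s s' : NState P T} {θ : ℝ} {j : T} (h : delayStep N s θ s')
    (hj : Expired N s j) : Expired N s' j := by
  obtain ⟨hθ, hbound, hm, hν⟩ := h
  have hθ0 : θ = 0 := le_antisymm (hj.2 ▸ hbound j hj.1) hθ
  refine ⟨hm ▸ hj.1, ?_⟩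
  simp [hν, hj.1, hj.2, hθ0]

theorem enabled_fire_of_pers {m : P → ℕ} {t j : T} (h : pers N m t j) :
    enabled N (fire N m t) j :=
  fun p => (h.2.2 p).trans (Nat.le_add_right _ _)

theorem clock_eq_of_pers (hN : TrivialIdyn N) {s s' : NState P T}
    {t k : T} (h : discStep N s t s') (hk : pers N s.1 t k) (hs : 0 ≤ s.2 k) : s'.2 k = s.2 k :=
  (hN k s'.1 (s.2 k) (s'.2 k) hs).mp (h.2.2.2.1 k hk)

theorem Expired.of_discStep (hN : TrivialIdyn N) {s s' : NState P T} {t j : T}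
    (h : discStep N s t s') (hp : pers N s.1 t j) (hj : Expired N s j) : Expired N s' j :=
  ⟨h.2.2.1 ▸ enabled_fire_of_pers hp, (clock_eq_of_pers hN h hp hj.2.ge).trans hj.2⟩

end Clocks

def oneIf (φ : Prop) : ℕ := if φ then 1 else 0

@[simp] theorem oneIf_le_oneIf {a b : Prop} : oneIf a ≤ oneIf b ↔ (a → b) := by
  unfold oneIf; split_ifs <;> simp_all

@[simp] theorem oneIf_eq_oneIf {a b : Prop} : oneIf a = oneIf b ↔ (a ↔ b) := by
  unfold oneIf; split_ifs <;> simp_all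

@[simp] theorem oneIf_le_oneIf_sub_oneIf {a b c : Prop} :
    oneIf c ≤ oneIf b - oneIf a ↔ (c → b ∧ ¬ a) := by
  unfold oneIf; split_ifs <;> simp_all

theorem oneIf_le_one (a : Prop) : oneIf a ≤ 1 := by
  unfold oneIf; split_ifs <;> simp

theorem oneIf_sub_oneIf {a b : Prop} (h : a → b) : oneIf b - oneIf a = oneIf (b ∧ ¬ a) := by
  unfold oneIf; split_ifs <;> simp_all

theorem oneIf_add_oneIf {a b : Prop} (h : ¬ (a ∧ b)) : oneIf a + oneIf b = oneIf (a ∨ b) := by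
  unfold oneIf; split_ifs <;> simp_all

def reachableMarkings (N : DTPN P T) : Set (P → ℕ) := {m | ∃ ν, (SG N).Reach (m, ν)}

def pointInterval (x : ℝ) (hx : 0 ≤ x) : TimeInterval := ⟨x, x, hx, le_rfl⟩

@[simp] theorem mem_pointInterval {x y : ℝ} {hx : 0 ≤ x} : (pointInterval x hx).mem y ↔ y = x := by
  simp [pointInterval, TimeInterval.mem, le_antisymm_iff, and_comm]

def Affected (N : DTPN P T) (m : P → ℕ) (t j : T) : Prop := enabled N m j ∧ ¬ pers N m t j

abbrev SafePlace (N : DTPN P T) : Type := reachableMarkings N ⊕ (T ⊕ T)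

abbrev SafeTrans (N : DTPN P T) : Type := T ⊕ (T × reachableMarkings N × (T → Bool))

/- Transition `.inl k` is the silent timer of `k`; `.inr (t, m, S)` fires `t` from marking `m`,
`S j` telling whether the affected transition `j` is due, i.e. which of its two places to empty. -/
def safeNet (N : DTPN P T) : DTPN (SafePlace N) (SafeTrans N) where
  Pre
    | .inl k, .inr (.inl j) => oneIf (j = k)
    | .inl _, _ => 0
    | .inr (_, m, _), .inl m' => oneIf ((m' : P → ℕ) = m)
    | .inr (t, m, S), .inr (.inl j) => oneIf (Affected N m t j ∧ S j = false ∧ j ≠ t)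
    | .inr (t, m, S), .inr (.inr j) => oneIf (j = t ∨ Affected N m t j ∧ S j = true)
  Post
    | .inl k, .inr (.inr j) => oneIf (j = k)
    | .inl _, _ => 0
    | .inr (t, m, _), .inl m' => oneIf ((m' : P → ℕ) = fire N m t)
    | .inr (t, m, _), .inr (.inl j) =>
        oneIf (enabled N (fire N m t) j ∧ (Affected N m t j ∨ ¬ enabled N m j))
    | .inr _, .inr (.inr _) => 0
  m0
    | .inl m' => oneIf ((m' : P → ℕ) = N.m0)
    | .inr (.inl j) => oneIf (enabled N N.m0 j)
    | .inr (.inr _) => 0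
  Is
    | .inl k, _ => N.Is k N.m0
    | .inr _, _ => pointInterval 0 le_rfl
  Idyn _ _ θ := pointInterval (max θ 0) (le_max_right _ _)

def safeLabel (N : DTPN P T) : SafeTrans N → Option T
  | .inl _ => none
  | .inr (t, _, _) => some t

def encMarking (N : DTPN P T) (m : P → ℕ) (Z : Set T) : SafePlace N → ℕ
  | .inl m' => oneIf ((m' : P → ℕ) = m)
  | .inr (.inl j) => oneIf (enabled N m j ∧ j ∉ Z)
  | .inr (.inr j) => oneIf (j ∈ Z)

def encClock (N : DTPN P T) (ν : T → ℝ) (Z : Set T) : SafeTrans N → ℝ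
  | .inl j => if j ∈ Z then 0 else ν j
  | .inr _ => 0

def encState (N : DTPN P T) (s : NState P T) (Z : Set T) : NState (SafePlace N) (SafeTrans N) :=
  (encMarking N s.1 Z, encClock N s.2 Z)

section Encoding

variable {N : DTPN P T} {m : P → ℕ} {Z : Set T}

theorem enabled_timer_iff {k : T} :
    enabled (safeNet N) (encMarking N m Z) (.inl k) ↔ enabled N m k ∧ k ∉ Z := by
  simp [enabled, safeNet, encMarking, Sum.forall]

theorem enabled_visible_iff {t : T} {mh : reachableMarkings N} {S : T → Bool} :
    enabled (safeNet N) (encMarking N m Z) (.inr (t, mh, S)) ↔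
      (mh : P → ℕ) = m ∧ t ∈ Z ∧ ∀ j, Affected N m t j → j ≠ t → (S j = true ↔ j ∈ Z) := by
  unfold enabled
  simp only [safeNet, ne_eq, encMarking, Sum.forall, oneIf_le_oneIf, Subtype.forall, forall_and,
    and_imp, or_imp, forall_eq]
  constructor
  · rintro ⟨hm, ⟨-, hfalse⟩, ht, htrue⟩
    obtain rfl := hm _ mh.2 rfl
    refine ⟨rfl, ht, fun j hj hjt => ⟨htrue j hj, fun hjZ => ?_⟩⟩
    by_contra hS
    exact hfalse j hj (Bool.eq_false_iff.mpr hS) hjt hjZ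
  · rintro ⟨rfl, ht, hS⟩
    refine ⟨fun _ _ => id, ⟨fun j hj _ _ => hj.1, fun j hj hSj hjt hjZ => ?_⟩, ht,
      fun j hj hSj => ?_⟩
    · simp [(hS j hj hjt).mpr hjZ] at hSj
    · by_cases hjt : j = t
      · exact hjt ▸ ht
      · exact (hS j hj hjt).mp hSj

theorem fire_timer {k : T} (hk : enabled N m k) (hkZ : k ∉ Z) :
    fire (safeNet N) (encMarking N m Z) (.inl k) = encMarking N m (insert k Z) := by
  funext p
  rcases p with m' | j | j <;> simp only [fire, safeNet, encMarking] <;> unfold oneIf <;>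
    split_ifs <;> simp_all

theorem fire_visible {t : T} {mh : reachableMarkings N} {S : T → Bool} (hmh : (mh : P → ℕ) = m)
    (ht : t ∈ Z) (hS : ∀ j, Affected N m t j → j ≠ t → (S j = true ↔ j ∈ Z))
    (hZ : ∀ j ∈ Z, enabled N m j) :
    fire (safeNet N) (encMarking N m Z) (.inr (t, mh, S)) =
      encMarking N (fire N m t) {j ∈ Z | pers N m t j} := by
  subst hmh
  funext p
  rcases p with m' | j | j <;> simp only [fire, safeNet, encMarking]
  · rw [oneIf_sub_oneIf id, oneIf_add_oneIf (by tauto)]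
    simp
  all_goals
    have hfire : pers N mh t j → enabled N (fire N mh t) j := enabled_fire_of_pers
    have hen : pers N mh t j → enabled N mh j := fun h => h.2.1
    have hjt : j = t → j ∈ Z ∧ ¬ pers N mh t j := by rintro rfl; exact ⟨ht, fun h => h.1 rfl⟩
    have hSj := hS j
    have hjZ := hZ j
    unfold Affected at *
  · simp only [Bool.eq_false_iff]
    rw [oneIf_sub_oneIf (by tauto), oneIf_add_oneIf (by tauto)]
    simp only [oneIf_eq_oneIf, Set.mem_ofPred_eq]
    tauto
  · rw [oneIf_sub_oneIf (by tauto), add_zero]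
    simp only [oneIf_eq_oneIf, Set.mem_ofPred_eq]
    tauto

theorem pers_timer_timer_iff {k j : T} :
    pers (safeNet N) (encMarking N m Z) (.inl k) (.inl j) ↔ j ≠ k ∧ enabled N m j ∧ j ∉ Z := by
  simp only [pers, ne_eq, Sum.inl.injEq, enabled, safeNet, not_forall, not_le, encMarking,
    Sum.forall, zero_le, implies_true, oneIf_le_oneIf, forall_eq, and_true, true_and, tsub_zero,
    oneIf_le_oneIf_sub_oneIf, and_self_left, and_congr_right_iff, and_iff_left_iff_imp, and_imp]
  tauto

theorem pers_visible_timer_iff {t j : T} {mh : reachableMarkings N} {S : T → Bool}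
    (hmh : (mh : P → ℕ) = m) (ht : t ∈ Z)
    (hS : ∀ j, Affected N m t j → j ≠ t → (S j = true ↔ j ∈ Z)) :
    pers (safeNet N) (encMarking N m Z) (.inr (t, mh, S)) (.inl j) ↔ j ∉ Z ∧ pers N m t j := by
  subst hmh
  rw [pers]
  simp only [ne_eq, reduceCtorEq, not_false_eq_true, enabled, safeNet, not_forall, not_le,
    encMarking, Sum.forall, zero_le, implies_true, oneIf_le_oneIf, forall_eq, and_true, true_and,
    tsub_self, Std.le_refl, oneIf_le_oneIf_sub_oneIf, not_and, Decidable.not_not, and_self_left]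
  constructor
  · rintro ⟨⟨hj, hjZ⟩, hS'⟩
    refine ⟨hjZ, by_contra fun hp => ?_⟩
    have hjt : j ≠ t := fun h => hjZ (h ▸ ht)
    exact hjt (hS' ⟨hj, hp⟩ (Bool.eq_false_iff.mpr fun h => hjZ ((hS j ⟨hj, hp⟩ hjt).mp h)))
  · rintro ⟨hjZ, hp⟩
    exact ⟨⟨hp.2.1, hjZ⟩, fun hA => absurd hp hA.2⟩

theorem not_pers_visible_visible {c c' : T × reachableMarkings N × (T → Bool)}
    (hc : (c.2.1 : P → ℕ) = m) : ¬ pers (safeNet N) (encMarking N m Z) (.inr c) (.inr c') := by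
  rintro ⟨-, hen, hle⟩
  obtain ⟨t', mh', S'⟩ := c'
  have := hle (.inl mh')
  simp [safeNet, encMarking, hc, (enabled_visible_iff.mp hen).1, oneIf] at this

theorem safeNet_m0 : (safeNet N).m0 = encMarking N N.m0 ∅ := by
  funext p
  rcases p with m' | j | j <;> simp [safeNet, encMarking, oneIf]

end Encoding

theorem isTPN_safeNet (N : DTPN P T) : IsTPN (safeNet N) := by
  refine ⟨fun t m θ x hθ => ?_, fun t m m' => by rcases t with k | c <;> rfl⟩
  simp [safeNet, hθ]

theorem visible_clock_eq_zero_of_discStep {N : DTPN P T}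
    {s s' : NState (SafePlace N) (SafeTrans N)} {t' : SafeTrans N}
    (hs : ∀ c, s.2 (.inr c) = 0) (h : discStep (safeNet N) s t' s') (c) : s'.2 (.inr c) = 0 := by
  by_cases hp : pers (safeNet N) s.1 t' (.inr c)
  · simpa [safeNet, hs] using h.2.2.2.1 _ hp
  by_cases hen : enabled (safeNet N) s'.1 (.inr c)
  · simpa [safeNet] using h.2.2.2.2.1 _ hen hp
  · exact h.2.2.2.2.2 _ hen

section Steps

variable {N : DTPN P T} {s : NState P T} {Z : Set T}

theorem discStep_timer (hs : WellClocked N s) {k : T} (hk : Expired N s k) (hkZ : k ∉ Z) :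
    discStep (safeNet N) (encState N s Z) (.inl k) (encState N s (insert k Z)) := by
  refine ⟨enabled_timer_iff.mpr ⟨hk.1, hkZ⟩, by simp [encState, encClock, hkZ, hk.2],
    (fire_timer hk.1 hkZ).symm, ?_, ?_, ?_⟩
  · rintro (j | c) hp
    · obtain ⟨hjk, -, hjZ⟩ := pers_timer_timer_iff.mp hp
      simp [safeNet, encState, encClock, hjZ, hjk, hs.2 j]
    · simp [safeNet, encState, encClock]
  · rintro (j | c) hen hp
    · obtain ⟨hj, hjZ⟩ := enabled_timer_iff.mp hen
      rw [Set.mem_insert_iff, not_or] at hjZ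
      exact absurd (pers_timer_timer_iff.mpr ⟨hjZ.1, hj, hjZ.2⟩) hp
    · simp [safeNet, encState, encClock]
  · rintro (j | c) hen
    · simp only [encState, encClock]
      split_ifs with hjZ
      · rfl
      · exact hs.1 j fun hj => hen (enabled_timer_iff.mpr ⟨hj, hjZ⟩)
    · rfl

theorem eq_encState_of_discStep_timer (hs : WellClocked N s) {k : T}
    {s₂ : NState (SafePlace N) (SafeTrans N)}
    (h : discStep (safeNet N) (encState N s Z) (.inl k) s₂) :
    Expired N s k ∧ k ∉ Z ∧ s₂ = encState N s (insert k Z) := by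
  have hvis := visible_clock_eq_zero_of_discStep (fun _ => rfl) h
  obtain ⟨hen, hzero, hfire, hpers, -, hdis⟩ := h
  obtain ⟨hk, hkZ⟩ := enabled_timer_iff.mp hen
  have hμ : s₂.1 = encMarking N s.1 (insert k Z) := hfire.trans (fire_timer hk hkZ)
  refine ⟨⟨hk, by simpa [encState, encClock, hkZ] using hzero⟩, hkZ, Prod.ext hμ (funext ?_)⟩
  rintro (j | c)
  · by_cases hj : j ≠ k ∧ enabled N s.1 j ∧ j ∉ Z
    · have hjZ : j ∉ insert k Z := by simp [hj.1, hj.2.2]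
      simpa [safeNet, encState, encClock, hjZ, hj.2.2, hs.2 j] using
        hpers _ (pers_timer_timer_iff.mpr hj)
    · rw [hdis (.inl j) (by rw [hμ, enabled_timer_iff]; grind)]
      simp only [encState, encClock, Set.mem_insert_iff]
      split_ifs with hjZ
      · rfl
      · exact (hs.1 j fun he => hj ⟨fun h => hjZ (.inl h), he, fun h => hjZ (.inr h)⟩).symm
  · exact hvis c

theorem discStep_visible (htpn : IsTPN N) (hs : WellClocked N s) (hm : s.1 ∈ reachableMarkings N)
    (hZ : ∀ j ∈ Z, enabled N s.1 j) {t : T} (ht : t ∈ Z) {s' : NState P T}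
    (h : discStep N s t s') :
    discStep (safeNet N) (encState N s Z) (.inr (t, ⟨s.1, hm⟩, fun j => decide (j ∈ Z)))
      (encState N s' {j ∈ Z | pers N s.1 t j}) := by
  obtain ⟨m, ν⟩ := s
  obtain ⟨m', ν'⟩ := s'
  obtain ⟨-, -, rfl, hpers, hnew, hdis⟩ := id h
  have hS : ∀ j, Affected N m t j → j ≠ t → (decide (j ∈ Z) = true ↔ j ∈ Z) :=
    fun _ _ _ => decide_eq_true_iff
  refine ⟨enabled_visible_iff.mpr ⟨rfl, ht, hS⟩, rfl,
    (fire_visible (mh := ⟨m, hm⟩) rfl ht hS hZ).symm, ?_, ?_, ?_⟩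
  · rintro (j | c) hp
    · obtain ⟨hjZ, hpj⟩ := (pers_visible_timer_iff rfl ht hS).mp hp
      simpa [safeNet, encState, encClock, hjZ, hs.2 j] using
        clock_eq_of_pers htpn.1 h hpj (hs.2 j)
    · exact absurd hp (not_pers_visible_visible rfl)
  · rintro (j | c) hen hp
    · obtain ⟨hj, hjZ⟩ := enabled_timer_iff.mp hen
      have hpj : ¬ pers N m t j := fun hpj => by
        by_cases hjZ' : j ∈ Z
        · exact hjZ ⟨hjZ', hpj⟩
        · exact hp ((pers_visible_timer_iff rfl ht hS).mpr ⟨hjZ', hpj⟩)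
      simpa [safeNet, encState, encClock, hjZ, htpn.2 j _ N.m0] using hnew j hj hpj
    · simp [safeNet, encState, encClock]
  · rintro (j | c) hen
    · simp only [encState, encClock]
      split_ifs with hjZ
      · rfl
      · exact hdis j fun hj => hen (enabled_timer_iff.mpr ⟨hj, hjZ⟩)
    · rfl

theorem exists_discStep_of_discStep_visible (htpn : IsTPN N) (hs : WellClocked N s)
    (hZ : ∀ j ∈ Z, Expired N s j) {t : T} {mh : reachableMarkings N} {S : T → Bool}
    {s₂ : NState (SafePlace N) (SafeTrans N)}
    (h : discStep (safeNet N) (encState N s Z) (.inr (t, mh, S)) s₂) :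
    ∃ s', discStep N s t s' ∧ s₂ = encState N s' {j ∈ Z | pers N s.1 t j} := by
  have hvis := visible_clock_eq_zero_of_discStep (fun _ => rfl) h
  obtain ⟨hen, -, hfire, hpers, hnew, hdis⟩ := h
  obtain ⟨hmh, ht, hS⟩ := enabled_visible_iff.mp hen
  set Z' := {j ∈ Z | pers N s.1 t j}
  have hμ : s₂.1 = encMarking N (fire N s.1 t) Z' :=
    hfire.trans (fire_visible hmh ht hS fun j hj => (hZ j hj).1)
  have hdisZ : ∀ j, ¬ (enabled N (fire N s.1 t) j ∧ j ∉ Z') → s₂.2 (.inl j) = 0 :=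
    fun j hj => hdis (.inl j) (by rwa [hμ, enabled_timer_iff])
  have hd : discStep N s t (fire N s.1 t, fun j => s₂.2 (.inl j)) := by
    refine ⟨(hZ t ht).1, (hZ t ht).2, rfl, fun j hpj => ?_, fun j hj hpj => ?_,
      fun j hj => hdisZ j fun h => hj h.1⟩
    · rw [htpn.1 _ _ _ _ (hs.2 j)]
      by_cases hjZ : j ∈ Z
      · rw [hdisZ j fun h => h.2 ⟨hjZ, hpj⟩, (hZ j hjZ).2]
      · simpa [safeNet, encState, encClock, hjZ, hs.2 j] using
          hpers _ ((pers_visible_timer_iff hmh ht hS).mpr ⟨hjZ, hpj⟩)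
    · rw [htpn.2 j _ N.m0]
      have hen' : enabled (safeNet N) s₂.1 (.inl j) := by
        rw [hμ, enabled_timer_iff]
        exact ⟨hj, fun h => hpj h.2⟩
      simpa [safeNet] using
        hnew _ hen' fun hp => hpj ((pers_visible_timer_iff hmh ht hS).mp hp).2
  refine ⟨_, hd, Prod.ext hμ (funext ?_)⟩
  rintro (j | c)
  · simp only [encState, encClock]
    split_ifs with hj
    · exact hdisZ j fun h => h.2 hj
    · rfl
  · exact hvis c

-- A due transition blocks time through its urgent visible copy, which exists as `s.1` is reachable.
theorem le_encClock_iff (hm : s.1 ∈ reachableMarkings N)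
    (hZ : ∀ j ∈ Z, Expired N s j) {θ : ℝ} :
    (∀ k, enabled (safeNet N) (encMarking N s.1 Z) k → θ ≤ encClock N s.2 Z k) ↔
      ∀ k, enabled N s.1 k → θ ≤ s.2 k := by
  constructor
  · intro h k hk
    by_cases hkZ : k ∈ Z
    · rw [(hZ k hkZ).2]
      exact h (.inr (k, ⟨s.1, hm⟩, fun j => decide (j ∈ Z)))
        (enabled_visible_iff.mpr ⟨rfl, hkZ, fun _ _ _ => decide_eq_true_iff⟩)
    · simpa [encClock, hkZ] using h (.inl k) (enabled_timer_iff.mpr ⟨hk, hkZ⟩)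
  · rintro h (j | ⟨t, mh, S⟩) hen
    · obtain ⟨hj, hjZ⟩ := enabled_timer_iff.mp hen
      simpa [encClock, hjZ] using h j hj
    · obtain ⟨-, ht, -⟩ := enabled_visible_iff.mp hen
      simpa [encClock, (hZ t ht).2] using h t (hZ t ht).1

theorem encClock_delay (hZ : ∀ j ∈ Z, Expired N s j) {θ : ℝ} (hθ : 0 ≤ θ)
    (hbound : ∀ k, enabled N s.1 k → θ ≤ s.2 k) :
    (fun k => if enabled (safeNet N) (encMarking N s.1 Z) k then encClock N s.2 Z k - θ else 0) =
      encClock N (fun k => if enabled N s.1 k then s.2 k - θ else 0) Z := by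
  funext k
  rcases k with j | c
  · by_cases hjZ : j ∈ Z <;> by_cases hj : enabled N s.1 j <;>
      simp [encClock, enabled_timer_iff, hjZ, hj]
  · split_ifs with hen
    · obtain ⟨t, mh, S⟩ := c
      obtain ⟨-, ht, -⟩ := enabled_visible_iff.mp hen
      have := hbound t (hZ t ht).1
      simp [encClock, le_antisymm (this.trans (hZ t ht).2.le) hθ]
    · rfl

theorem delayStep_encState_iff (hm : s.1 ∈ reachableMarkings N)
    (hZ : ∀ j ∈ Z, Expired N s j) {θ : ℝ} {s₂ : NState (SafePlace N) (SafeTrans N)} :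
    delayStep (safeNet N) (encState N s Z) θ s₂ ↔
      ∃ s', delayStep N s θ s' ∧ s₂ = encState N s' Z := by
  constructor
  · rintro ⟨hθ, hbound, hμ, hκ⟩
    have hbound' := (le_encClock_iff hm hZ).mp hbound
    exact ⟨(s.1, fun k => if enabled N s.1 k then s.2 k - θ else 0), ⟨hθ, hbound', rfl, rfl⟩,
      Prod.ext hμ (hκ.trans (encClock_delay hZ hθ hbound'))⟩
  · rintro ⟨s', ⟨hθ, hbound, hm', hν'⟩, rfl⟩
    refine ⟨hθ, (le_encClock_iff hm hZ).mpr hbound, by simp [encState, hm'], ?_⟩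
    simp only [encState, hm', hν']
    exact (encClock_delay hZ hθ hbound).symm

theorem initState_safeNet_iff {s₂ : NState (SafePlace N) (SafeTrans N)} :
    initState (safeNet N) s₂ ↔ ∃ s, initState N s ∧ s₂ = encState N s ∅ := by
  constructor
  · rintro ⟨hμ, hen, hdis⟩
    rw [safeNet_m0] at hμ hen hdis
    have htimer : ∀ k, enabled (safeNet N) (encMarking N N.m0 ∅) (.inl k) ↔ enabled N N.m0 k := by
      simp [enabled_timer_iff]
    refine ⟨(N.m0, fun k => s₂.2 (.inl k)), ⟨rfl, fun k hk => ?_, fun k hk => ?_⟩,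
      Prod.ext hμ (funext ?_)⟩
    · simpa [safeNet] using hen (.inl k) ((htimer k).mpr hk)
    · exact hdis (.inl k) (mt (htimer k).mp hk)
    · rintro (k | c)
      · simp [encState, encClock]
      · exact hdis (.inr c) fun h => (enabled_visible_iff.mp h).2.1
  · rintro ⟨s, ⟨hm, hen, hdis⟩, rfl⟩
    refine ⟨by simp [encState, hm, safeNet_m0], ?_, ?_⟩ <;> rintro (k | c) h <;>
      rw [safeNet_m0] at h
    · simpa [safeNet, encState, encClock] using hen k (enabled_timer_iff.mp h).1
    · exact absurd (enabled_visible_iff.mp h).2.1 id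
    · simpa [encState, encClock] using hdis k fun hk => h (enabled_timer_iff.mpr ⟨hk, id⟩)
    · rfl

end Steps

def Encodes (N : DTPN P T) (s : NState P T) (s₂ : NState (SafePlace N) (SafeTrans N)) : Prop :=
  (SG N).Reach s ∧ ∃ Z : Set T, (∀ j ∈ Z, Expired N s j) ∧ s₂ = encState N s Z

section Bisimulation

variable {N : DTPN P T}

theorem silentSteps_expire {s : NState P T} {Z : Set T} {k : T} (hs : WellClocked N s)
    (hk : Expired N s k) :
    silentSteps (labelledSG (safeNet N) (safeLabel N)) (encState N s Z)
      (encState N s (insert k Z)) := by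
  by_cases hkZ : k ∈ Z
  · rw [Set.insert_eq_of_mem hkZ]
    exact .refl
  · exact .single ⟨.inl k, rfl, discStep_timer hs hk hkZ⟩

theorem weakSim_encodes (htpn : IsTPN N) :
    WeakSim (SG N) (labelledSG (safeNet N) (safeLabel N)) (Encodes N) := by
  rintro s α s' hstep _ ⟨hreach, Z, hZ, rfl⟩
  have hs := wellClocked_of_reach hreach
  have hm : s.1 ∈ reachableMarkings N := ⟨s.2, hreach⟩
  refine match α, hstep with
  | .disc t, hstep => ?_
  | .delay θ, hstep => ⟨_, ⟨_, .refl, (delayStep_encState_iff hm hZ).mpr ⟨s', hstep, rfl⟩⟩,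
      hreach.of_step hstep, Z, fun j hj => (hZ j hj).of_delayStep hstep, rfl⟩
  have ht : Expired N s t := ⟨hstep.1, hstep.2.1⟩
  have hZt : ∀ j ∈ insert t Z, Expired N s j := by
    rintro j (rfl | hj)
    exacts [ht, hZ j hj]
  exact ⟨_, ⟨_, silentSteps_expire hs ht, _, rfl,
      discStep_visible htpn hs hm (fun j hj => (hZt j hj).1) (Set.mem_insert t Z) hstep⟩,
    hreach.of_step hstep, _, fun j hj => (hZt j hj.1).of_discStep htpn.1 hstep hj.2, rfl⟩

theorem weakSim_encodes_symm (htpn : IsTPN N) :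
    WeakSim (labelledSG (safeNet N) (safeLabel N)) (SG N) (fun s₂ s => Encodes N s s₂) := by
  rintro _ α s₂' hstep s ⟨hreach, Z, hZ, rfl⟩
  have hs := wellClocked_of_reach hreach
  have hm : s.1 ∈ reachableMarkings N := ⟨s.2, hreach⟩
  match α, hstep with
  | .silent, ⟨.inl k, _, h⟩ =>
    obtain ⟨hk, -, rfl⟩ := eq_encState_of_discStep_timer hs h
    refine ⟨s, .refl, hreach, insert k Z, ?_, rfl⟩
    rintro j (rfl | hj)
    exacts [hk, hZ j hj]
  | .disc t, ⟨.inr (t', mh, S), hl, h⟩ =>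
    obtain rfl : t' = t := Option.some.inj hl
    obtain ⟨s', hd, rfl⟩ := exists_discStep_of_discStep_visible htpn hs hZ h
    exact ⟨s', ⟨s, .refl, hd⟩, hreach.of_step (l := .disc t') hd, _,
      fun j hj => (hZ j hj.1).of_discStep htpn.1 hd hj.2, rfl⟩
  | .delay θ, h =>
    obtain ⟨s', hd, rfl⟩ := (delayStep_encState_iff hm hZ).mp h
    exact ⟨s', ⟨s, .refl, hd⟩, hreach.of_step (l := .delay θ) hd, Z,
      fun j hj => (hZ j hj).of_delayStep hd, rfl⟩

theorem exists_encodes_of_init {s₂ : NState (SafePlace N) (SafeTrans N)}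
    (h : s₂ ∈ (labelledSG (safeNet N) (safeLabel N)).init) :
    ∃ s ∈ (SG N).init, Encodes N s s₂ := by
  obtain ⟨s, hs, rfl⟩ := initState_safeNet_iff.mp h
  exact ⟨s, hs, ⟨s, hs, .refl⟩, ∅, by simp, rfl⟩

theorem bisimilar_safeNet (htpn : IsTPN N) :
    Bisimilar (SG N) (labelledSG (safeNet N) (safeLabel N)) :=
  ⟨Encodes N, weakSim_encodes htpn, weakSim_encodes_symm htpn,
    fun s hs => ⟨encState N s ∅, initState_safeNet_iff.mpr ⟨s, hs, rfl⟩, ⟨s, hs, .refl⟩, ∅,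
      by simp, rfl⟩,
    fun _ h => exists_encodes_of_init h⟩

theorem oneSafe_safeNet (htpn : IsTPN N) : OneSafe (safeNet N) := by
  intro s₂ hs₂ p
  obtain ⟨s, -, Z, -, rfl⟩ := (weakSim_encodes_symm htpn).exists_of_reach
    (fun _ h => (exists_encodes_of_init h).imp fun _ => And.right)
    (reach_labelledSG_of_reach_SG (safeLabel N) hs₂)
  rcases p with _ | _ | _ <;> exact oneIf_le_one _

end Bisimulation

end OneSafeTPN

theorem TPN_equiv_one_safe_TPN_general {P T : Type} [Fintype T]
    (N : DTPN P T) (htpn : IsTPN N) (hfin : FiniteMarkings N) :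
    ∃ (P' T' : Type) (_ : Fintype P') (_ : Fintype T') (N' : DTPN P' T')
      (ℓ : T' → Option T),
      IsTPN N' ∧ OneSafe N' ∧ Bisimilar (SG N) (labelledSG N' ℓ) := by
  have : Fintype (OneSafeTPN.reachableMarkings N) := hfin.fintype
  exact ⟨_, _, inferInstance, inferInstance, OneSafeTPN.safeNet N, OneSafeTPN.safeLabel N,
    OneSafeTPN.isTPN_safeNet N, OneSafeTPN.oneSafe_safeNet htpn, OneSafeTPN.bisimilar_safeNet htpn⟩

/-- **Corollary 1 of the paper.** For every Time Petri Net `N` with a finite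
set of reachable markings, there is a 1-safe Time Petri Net `N'` over finite
sets of places and transitions, with a labelling of its transitions by
`T ∪ {τ̂}`, whose labelled state graph is weakly timed bisimilar to the state
graph of `N`. -/
theorem TPN_equiv_one_safe_TPN {P T : Type} [Fintype P] [Fintype T]
    (N : DTPN P T) (htpn : IsTPN N) (hfin : FiniteMarkings N) :
    ∃ (P' T' : Type) (_ : Fintype P') (_ : Fintype T') (N' : DTPN P' T')
      (ℓ : T' → Option T),
      IsTPN N' ∧ OneSafe N' ∧ Bisimilar (SG N) (labelledSG N' ℓ) :=
  TPN_equiv_one_safe_TPN_general N htpn hfin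
end
end

section
/- Let f, g : ℝ → ℝ be monotone nondecreasing functions, and let κ_i ≤ λ_i, κ_j ≤ λ_j and μ be real numbers satisfying κ_i ≤ κ_j + μ, κ_j + μ ≤ λ_i and λ_i ≤ λ_j + μ. Let S = {(x, y) ∈ ℝ² : κ_i ≤ x ≤ λ_i, κ_j ≤ y ≤ λ_j, x − y ≤ μ}. Then the supremum of f(x) − g(y) over (x, y) ∈ S equals the supremum of f(θ) − g(θ − μ) over θ ∈ [κ_j + μ, λ_i]. -/
/-!
Every value `f x - g y` on the domain is dominated by the value at a point of the line
`x - y = μ`: raise `x` to `θ = max x (κⱼ + μ)` (which only increases `f x`) and replace `y` by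
`θ - μ ≤ y` (which only decreases `g y`). Conversely the segment of that line with
`θ ∈ [κⱼ + μ, λᵢ]` lies in the domain, so the two sets of values have the same supremum.
-/

theorem sub_le_sub_max_add_of_monotone {α β : Type*}
    [AddCommGroup α] [LinearOrder α] [IsOrderedAddMonoid α]
    [AddCommGroup β] [PartialOrder β] [IsOrderedAddMonoid β]
    {f g : α → β} (hf : Monotone f) (hg : Monotone g) {x y c μ : α}
    (hcy : c ≤ y) (hxy : x - y ≤ μ) :
    f x - g y ≤ f (max x (c + μ)) - g (max x (c + μ) - μ) := by
  refine sub_le_sub (hf (le_max_left _ _)) (hg ?_)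
  rw [sub_le_iff_le_add, max_le_iff]
  exact ⟨by rwa [sub_le_iff_le_add'] at hxy, add_le_add_left hcy μ⟩

theorem sup_diff_over_domain_eq_sup_on_interval_general
    (f g : ℝ → ℝ) (hf : Monotone f) (hg : Monotone g)
    (κi li κj lj μ : ℝ)
    (h1 : κi ≤ κj + μ) (h2 : κj + μ ≤ li) (h3 : li ≤ lj + μ) :
    sSup ((fun p : ℝ × ℝ => f p.1 - g p.2) ''
        {p : ℝ × ℝ | κi ≤ p.1 ∧ p.1 ≤ li ∧ κj ≤ p.2 ∧ p.2 ≤ lj ∧ p.1 - p.2 ≤ μ}) =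
      sSup ((fun θ : ℝ => f θ - g (θ - μ)) '' Set.Icc (κj + μ) li) := by
  apply csSup_eq_csSup_of_forall_exists_le
  · rintro _ ⟨⟨x, y⟩, ⟨-, hx, hy, -, hxy⟩, rfl⟩
    exact ⟨_, ⟨max x (κj + μ), ⟨le_max_right _ _, max_le hx h2⟩, rfl⟩,
      sub_le_sub_max_add_of_monotone hf hg hy hxy⟩
  · rintro _ ⟨θ, ⟨hθ, hθl⟩, rfl⟩
    refine ⟨_, ⟨(θ, θ - μ), ?_, rfl⟩, le_rfl⟩
    exact ⟨h1.trans hθ, hθl, le_sub_iff_add_le.2 hθ, sub_le_iff_le_add.2 (hθl.trans h3),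
      (sub_sub_cancel θ μ).le⟩

/-- **Reduction (C2).** For monotone nondecreasing `f, g : ℝ → ℝ` and a
closure-form difference-constraint domain
`S = {(x,y) : κᵢ ≤ x ≤ λᵢ, κⱼ ≤ y ≤ λⱼ, x − y ≤ μ}` (with tight bounds, i.e.
`κᵢ ≤ κⱼ + μ ≤ λᵢ ≤ λⱼ + μ`), the supremum of `f x − g y` over `S` equals the
supremum of `f θ − g (θ − μ)` over `θ ∈ [κⱼ + μ, λᵢ]`. -/
theorem sup_diff_over_domain_eq_sup_on_interval
    (f g : ℝ → ℝ) (hf : Monotone f) (hg : Monotone g)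
    (κi li κj lj μ : ℝ)
    (hij : κi ≤ li) (hjj : κj ≤ lj)
    (h1 : κi ≤ κj + μ) (h2 : κj + μ ≤ li) (h3 : li ≤ lj + μ) :
    sSup ((fun p : ℝ × ℝ => f p.1 - g p.2) ''
        {p : ℝ × ℝ | κi ≤ p.1 ∧ p.1 ≤ li ∧ κj ≤ p.2 ∧ p.2 ≤ lj ∧ p.1 - p.2 ≤ μ}) =
      sSup ((fun θ : ℝ => f θ - g (θ - μ)) '' Set.Icc (κj + μ) li) :=
  sup_diff_over_domain_eq_sup_on_interval_general f g hf hg κi li κj lj μ h1 h2 h3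
end
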